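/- If Φ : unit sphere of ℂ² → ℝ³ is any map of the form Φ(ψ)ᵢ = ⟨ψ|Aᵢ|ψ⟩ for Hermitian 2×2 matrices A₁, A₂, A₃, and Φ is SU(2)-equivariant in the sense that for every U ∈ SU(2) there is R_U ∈ O(3) with Φ(Uψ) = R_U Φ(ψ) for all ψ, and the image of Φ contains the unit sphere S², then each Aᵢ has constant trace term equal and the traceless parts of A₁, A₂, A₃ are obtained from the Pauli matrices by a fixed orthogonal transformation composed with a common nonzero scaling; i.e., Φ agrees with the Bloch map up to a rotation, scaling, and common translation. -/

import Mathlib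

/-!
Writing `Aᵢ = tᵢ I + ∑ⱼ cᵢⱼ σⱼ`, the map is `Φ(ψ) = t + C b(ψ)` with `b` the Bloch map, which sends
unit spinors to the unit sphere `S²`. So `S²` lies inside its own image `t + C S²` under an affine
map. Then `C` is onto (`v` and `-v` both lie in `t + range C`), and with `D = C⁻¹` the map
`v ↦ D v - D t` sends the sphere into itself. Comparing `v` with `-v` forces `D t ⟂ range D`, so
`t = 0`, and then `D` preserves the norm of unit vectors, hence `C` is orthogonal.
-/

open Matrix Complex

noncomputable def pauli : Fin 3 → Matrix (Fin 2) (Fin 2) ℂ :=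
  ![!![0, 1; 1, 0], !![0, -I; I, 0], !![1, 0; 0, -1]]

section UnitSphere

variable {ι : Type*} [Fintype ι]

lemma forall_of_forall_smul_of_dotProduct_self_eq_one {P : (ι → ℝ) → Prop} (zero : P 0)
    (smul : ∀ (r : ℝ) (u : ι → ℝ), u ⬝ᵥ u = 1 → P (r • u)) (v : ι → ℝ) : P v := by
  rcases eq_or_ne v 0 with rfl | hv
  · exact zero
  have hpos : 0 < v ⬝ᵥ v := by simpa using dotProduct_star_self_pos_iff.mpr hv
  convert smul √(v ⬝ᵥ v) ((√(v ⬝ᵥ v))⁻¹ • v) ?_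
  · rw [smul_smul, mul_inv_cancel₀ (Real.sqrt_pos.mpr hpos).ne', one_smul]
  · rw [smul_dotProduct, dotProduct_smul, smul_eq_mul, smul_eq_mul, ← mul_assoc, ← mul_inv,
      Real.mul_self_sqrt hpos.le, inv_mul_cancel₀ hpos.ne']

lemma sub_dotProduct_sub_self (a b : ι → ℝ) :
    (a - b) ⬝ᵥ (a - b) = a ⬝ᵥ a - 2 * (a ⬝ᵥ b) + b ⬝ᵥ b := by
  simp only [sub_dotProduct, dotProduct_sub, dotProduct_comm b a]
  ring

variable [DecidableEq ι]

lemma transpose_mul_self_eq_one_of_dotProduct_self_mulVec {C : Matrix ι ι ℝ}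
    (h : ∀ x, C *ᵥ x ⬝ᵥ C *ᵥ x = x ⬝ᵥ x) : Cᵀ * C = 1 := by
  have polarize : ∀ x y, C *ᵥ x ⬝ᵥ C *ᵥ y = x ⬝ᵥ y := by
    intro x y
    have hxy := h (x + y)
    simp only [mulVec_add, add_dotProduct, dotProduct_add, h x, h y,
      dotProduct_comm (C *ᵥ y), dotProduct_comm y] at hxy
    linarith
  ext i j
  calc (Cᵀ * C) i j = Pi.single i 1 ⬝ᵥ (Cᵀ * C) *ᵥ Pi.single j 1 := by simp
    _ = C *ᵥ Pi.single i 1 ⬝ᵥ C *ᵥ Pi.single j 1 := by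
      rw [← mulVec_mulVec, dotProduct_mulVec, vecMul_transpose]
    _ = Pi.single i 1 ⬝ᵥ Pi.single j 1 := polarize _ _
    _ = (1 : Matrix ι ι ℝ) i j := by rw [single_dotProduct, one_mul, Pi.single_apply, one_apply]

variable {t : ι → ℝ} {C : Matrix ι ι ℝ}

lemma isUnit_of_sphere_subset_affine_image
    (h : ∀ v, v ⬝ᵥ v = 1 → ∃ w, w ⬝ᵥ w = 1 ∧ v = t + C *ᵥ w) : IsUnit C := by
  rw [← mulVec_surjective_iff_isUnit]
  refine forall_of_forall_smul_of_dotProduct_self_eq_one ⟨0, mulVec_zero C⟩ fun r u hu => ?_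
  obtain ⟨w₁, -, hw₁⟩ := h u hu
  obtain ⟨w₂, -, hw₂⟩ := h (-u) (by rwa [neg_dotProduct_neg])
  refine ⟨(r / 2) • (w₁ - w₂), ?_⟩
  rw [mulVec_smul, mulVec_sub, eq_sub_of_add_eq' hw₁.symm, eq_sub_of_add_eq' hw₂.symm]
  module

theorem eq_zero_and_transpose_mul_self_eq_one_of_sphere_subset_affine_image
    (h : ∀ v, v ⬝ᵥ v = 1 → ∃ w, w ⬝ᵥ w = 1 ∧ v = t + C *ᵥ w) : t = 0 ∧ Cᵀ * C = 1 := by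
  obtain ⟨⟨C, D, hCD, hDC⟩, rfl⟩ := isUnit_of_sphere_subset_affine_image h
  set u := D *ᵥ t
  have hsphere : ∀ v, v ⬝ᵥ v = 1 → (D *ᵥ v - u) ⬝ᵥ (D *ᵥ v - u) = 1 := by
    intro v hv
    obtain ⟨w, hw, rfl⟩ := h v hv
    rwa [mulVec_add, mulVec_mulVec, hDC, one_mulVec, add_sub_cancel_left]
  have horth : ∀ v, D *ᵥ v ⬝ᵥ u = 0 := by
    refine forall_of_forall_smul_of_dotProduct_self_eq_one (by simp) fun r v hv => ?_
    have h₁ := hsphere v hv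
    have h₂ := hsphere (-v) (by rwa [neg_dotProduct_neg])
    rw [sub_dotProduct_sub_self] at h₁ h₂
    rw [mulVec_neg, neg_dotProduct_neg, neg_dotProduct] at h₂
    rw [mulVec_smul, smul_dotProduct, smul_eq_mul, mul_eq_zero]
    right
    linarith
  have hu : u = 0 := dotProduct_self_eq_zero.mp (horth t)
  have ht : t = 0 := by
    rw [← one_mulVec t, ← hCD, ← mulVec_mulVec]
    exact (congrArg (C *ᵥ ·) hu).trans (mulVec_zero C)
  have hisom : ∀ v, D *ᵥ v ⬝ᵥ D *ᵥ v = v ⬝ᵥ v := by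
    refine forall_of_forall_smul_of_dotProduct_self_eq_one (by simp) fun r v hv => ?_
    have h₁ := hsphere v hv
    rw [hu, sub_zero] at h₁
    simp only [mulVec_smul, smul_dotProduct, dotProduct_smul, h₁, hv]
  refine ⟨ht, transpose_mul_self_eq_one_of_dotProduct_self_mulVec fun x => ?_⟩
  rw [← hisom (C *ᵥ x), mulVec_mulVec, hDC, one_mulVec]

end UnitSphere

noncomputable def bloch (ψ : Fin 2 → ℂ) (j : Fin 3) : ℝ :=
  (star ψ ⬝ᵥ pauli j *ᵥ ψ).re

lemma sum_bloch_sq (ψ : Fin 2 → ℂ) : ∑ j, bloch ψ j ^ 2 = (∑ i, ‖ψ i‖ ^ 2) ^ 2 := by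
  simp [bloch, pauli, Fin.sum_univ_three, Fin.sum_univ_two, mulVec, dotProduct, Complex.sq_norm,
    normSq_apply]
  ring

lemma re_star_dotProduct_self {n : Type*} [Fintype n] (ψ : n → ℂ) :
    (star ψ ⬝ᵥ ψ).re = ∑ i, ‖ψ i‖ ^ 2 := by
  simp [dotProduct, Complex.sq_norm, normSq_apply]

lemma re_star_dotProduct_smul_one_add_sum_pauli_mulVec (t : ℝ) (c : Fin 3 → ℝ)
    (ψ : Fin 2 → ℂ) :
    (star ψ ⬝ᵥ ((t : ℂ) • 1 + ∑ j, (c j : ℂ) • pauli j) *ᵥ ψ).re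
      = t * ∑ i, ‖ψ i‖ ^ 2 + ∑ j, c j * bloch ψ j := by
  simp only [add_mulVec, smul_mulVec, one_mulVec, sum_mulVec, dotProduct_add, dotProduct_smul,
    dotProduct_sum, add_re, re_sum, smul_eq_mul, re_ofReal_mul, re_star_dotProduct_self, bloch]

lemma Matrix.IsHermitian.exists_eq_smul_one_add_sum_pauli {A : Matrix (Fin 2) (Fin 2) ℂ}
    (hA : A.IsHermitian) :
    ∃ (t : ℝ) (c : Fin 3 → ℝ), A = (t : ℂ) • 1 + ∑ j, (c j : ℂ) • pauli j := by
  have h00 : (A 0 0).im = 0 := conj_eq_iff_im.mp (hA.apply 0 0)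
  have h11 : (A 1 1).im = 0 := conj_eq_iff_im.mp (hA.apply 1 1)
  have h10 : A 1 0 = star (A 0 1) := (hA.apply 1 0).symm
  refine ⟨((A 0 0).re + (A 1 1).re) / 2,
    ![(A 0 1).re, -(A 0 1).im, ((A 0 0).re - (A 1 1).re) / 2], ?_⟩
  ext i j
  fin_cases i <;> fin_cases j <;> apply Complex.ext <;>
    simp [pauli, Fin.sum_univ_three, h00, h11, h10] <;> ring

theorem equivariant_projection_is_bloch_up_to_symmetry_general
    (A : Fin 3 → Matrix (Fin 2) (Fin 2) ℂ) (hA : ∀ i, (A i).IsHermitian)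
    (Φ : (Fin 2 → ℂ) → Fin 3 → ℝ)
    (hΦ : ∀ ψ i, Φ ψ i = (star ψ ⬝ᵥ (A i).mulVec ψ).re)
    (hsurj : ∀ v : Fin 3 → ℝ, (∑ i, v i ^ 2 = 1) →
      ∃ ψ : Fin 2 → ℂ, (∑ i : Fin 2, ‖ψ i‖ ^ 2 = 1) ∧ ∀ i, Φ ψ i = v i) :
    ∃ (t s : ℝ) (R : Matrix (Fin 3) (Fin 3) ℝ),
      R ∈ Matrix.orthogonalGroup (Fin 3) ℝ ∧ s ≠ 0 ∧
      ∀ i, A i = (t : ℂ) • (1 : Matrix (Fin 2) (Fin 2) ℂ) +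
        (s : ℂ) • ∑ j, (R i j : ℂ) • pauli j := by
  choose t c hdec using fun i => (hA i).exists_eq_smul_one_add_sum_pauli
  have hsq (v : Fin 3 → ℝ) : v ⬝ᵥ v = ∑ i, v i ^ 2 := by simp [dotProduct, sq]
  have himage : ∀ v, v ⬝ᵥ v = 1 → ∃ w, w ⬝ᵥ w = 1 ∧ v = t + of c *ᵥ w := by
    intro v hv
    obtain ⟨ψ, hψ, hΦv⟩ := hsurj v (hsq v ▸ hv)
    refine ⟨bloch ψ, by rw [hsq, sum_bloch_sq, hψ, one_pow], funext fun i => ?_⟩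
    rw [← hΦv, hΦ, hdec, re_star_dotProduct_smul_one_add_sum_pauli_mulVec, hψ, mul_one]
    rfl
  obtain ⟨ht, hc⟩ := eq_zero_and_transpose_mul_self_eq_one_of_sphere_subset_affine_image himage
  refine ⟨0, 1, of c, (mem_orthogonalGroup_iff' _ _).mpr hc, one_ne_zero, fun i => ?_⟩
  rw [hdec i, congrFun ht i]
  simp

theorem equivariant_projection_is_bloch_up_to_symmetry
    (A : Fin 3 → Matrix (Fin 2) (Fin 2) ℂ) (hA : ∀ i, (A i).IsHermitian)
    (Φ : (Fin 2 → ℂ) → Fin 3 → ℝ)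
    (hΦ : ∀ ψ i, Φ ψ i = (star ψ ⬝ᵥ (A i).mulVec ψ).re)
    (hequiv : ∀ U : Matrix.specialUnitaryGroup (Fin 2) ℂ,
      ∃ R ∈ Matrix.orthogonalGroup (Fin 3) ℝ,
        ∀ ψ : Fin 2 → ℂ, (∑ i : Fin 2, ‖ψ i‖ ^ 2 = 1) →
          ∀ i, Φ ((U : Matrix (Fin 2) (Fin 2) ℂ).mulVec ψ) i = ∑ j, R i j * Φ ψ j)
    (hsurj : ∀ v : Fin 3 → ℝ, (∑ i, v i ^ 2 = 1) →
      ∃ ψ : Fin 2 → ℂ, (∑ i : Fin 2, ‖ψ i‖ ^ 2 = 1) ∧ ∀ i, Φ ψ i = v i) :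
    ∃ (t s : ℝ) (R : Matrix (Fin 3) (Fin 3) ℝ),
      R ∈ Matrix.orthogonalGroup (Fin 3) ℝ ∧ s ≠ 0 ∧
      ∀ i, A i = (t : ℂ) • (1 : Matrix (Fin 2) (Fin 2) ℂ) +
        (s : ℂ) • ∑ j, (R i j : ℂ) • pauli j :=
  equivariant_projection_is_bloch_up_to_symmetry_general A hA Φ hΦ hsurj
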